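/- arXiv:2401.08024 — 2 statements merged into one kernel-verified Lean document; each statement's English description precedes it below -/
import Mathlib

section
/- For the general AdaBB iteration, the quantities P_k and M_k satisfy: P_k = α_k·θ_k for all k ≥ 1, and, for all k ≥ 0, 2M_{k+1} ≤ 1 and P_{k+1} ≤ P_k + α_k. -/
open scoped RealInnerProductSpace
open Finset Filter

noncomputable section

/-- The general AdaBB iteration (Algorithm 2 of the paper) for a convex differentiable
function `f : ℝⁿ → ℝ` that attains its minimum.  `f'` is the gradient of `f`,
`x` the iterates, `α` the stepsizes, `θ` the stepsize ratios and `lam` the short BB stepsizes. -/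
structure AdaBB (n : ℕ) where
  f : EuclideanSpace ℝ (Fin n) → ℝ
  f' : EuclideanSpace ℝ (Fin n) → EuclideanSpace ℝ (Fin n)
  x : ℕ → EuclideanSpace ℝ (Fin n)
  α : ℕ → ℝ
  θ : ℕ → ℝ
  lam : ℕ → ℝ
  hconv : ConvexOn ℝ Set.univ f
  hgrad : ∀ y, HasGradientAt f (f' y) y
  hmin : ∃ z, ∀ y, f z ≤ f y
  hα0 : 0 < α 0
  hθ0 : 0 ≤ θ 0
  hx1 : x 1 = x 0 - α 0 • f' (x 0)
  hne : ∀ k, f' (x (k + 1)) ≠ f' (x k)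
  hlam : ∀ k, lam (k + 1) =
    ⟪f' (x (k + 1)) - f' (x k), x (k + 1) - x k⟫ / ‖f' (x (k + 1)) - f' (x k)‖ ^ 2
  hlampos : ∀ k, 0 < lam (k + 1)
  hcase1 : ∀ k, α k ≤ lam (k + 1) →
    α (k + 1) = Real.sqrt (1 + θ k) * α k ∧ θ (k + 1) = α (k + 1) / α k
  hcase2 : ∀ k, α k / 2 < lam (k + 1) → lam (k + 1) < α k →
    (α (k + 1) = min (Real.sqrt (lam (k + 1) / (2 * (α k - lam (k + 1)))))
        (Real.sqrt ((1 + θ k) * lam (k + 1) / (2 * lam (k + 1) - α k))) * α k ∨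
      α (k + 1) = lam (k + 1)) ∧
    θ (k + 1) = 2 * α (k + 1) / α k - α (k + 1) / lam (k + 1)
  hcase3 : ∀ k, lam (k + 1) ≤ α k / 2 →
    (α (k + 1) = Real.sqrt (α k / (2 * (α k - lam (k + 1)))) * lam (k + 1) ∨
      α (k + 1) = lam (k + 1) / Real.sqrt 2) ∧
    θ (k + 1) = α (k + 1) / α k
  hstep : ∀ k, x (k + 2) = x (k + 1) - α (k + 1) • f' (x (k + 1))

namespace AdaBB

variable {n : ℕ}

/-- `M_k` (for `k ≥ 1`). -/
def M (S : AdaBB n) (k : ℕ) : ℝ :=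
  if S.α (k - 1) ≤ S.lam k then 0
  else if S.α (k - 1) / 2 < S.lam k then
    S.α k ^ 2 / (S.lam k * S.α (k - 1)) - S.α k ^ 2 / S.α (k - 1) ^ 2
  else S.α k ^ 2 / S.lam k ^ 2 - S.α k ^ 2 / (S.α (k - 1) * S.lam k)

/-- `P_k` for `k ≥ 1`. -/
def Paux (S : AdaBB n) (k : ℕ) : ℝ :=
  if S.α (k - 1) ≤ S.lam k then S.α k ^ 2 / S.α (k - 1)
  else if S.α (k - 1) / 2 < S.lam k then
    2 * S.α k ^ 2 / S.α (k - 1) - S.α k ^ 2 / S.lam k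
  else S.α k ^ 2 / S.α (k - 1)

/-- `P_k`, with the convention `P_0 = P_1 - α_0`. -/
def P (S : AdaBB n) (k : ℕ) : ℝ :=
  if k = 0 then S.Paux 1 - S.α 0 else S.Paux k

/-- `w_k = α_k + P_k - P_{k+1}`. -/
def w (S : AdaBB n) (k : ℕ) : ℝ := S.α k + S.P k - S.P (k + 1)

/-- The Lyapunov function `Υ_k` (for `k ≥ 1`), relative to a minimizer `xs` of `f`. -/
def Upsilon (S : AdaBB n) (xs : EuclideanSpace ℝ (Fin n)) (k : ℕ) : ℝ :=
  ‖S.x k - xs‖ ^ 2 + 2 * S.M k * ‖S.x k - S.x (k - 1)‖ ^ 2 +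
    (2 * S.α (k - 1) + 2 * S.P (k - 1)) * (S.f (S.x (k - 1)) - S.f xs)

end AdaBB

end
/-! Every claim concerns one step `k → k + 1`. With `a = α_k`, `l = λ_{k+1}` and `b = α_{k+1}`,
the bound `2 M_{k+1} ≤ 1` reduces to `b² ≤ l a² / (2 (a - l))` in case (ii) and to
`b² ≤ a l² / (2 (a - l))` in case (iii), while `P_{k+1} ≤ α_k θ_k + α_k` reduces to
`b² ≤ (1 + θ_k) l a² / (2 l - a)` in case (ii), follows from `b² ≤ l² ≤ a²` in case (iii), and is
an equality in case (i). Option I is the largest stepsize these bounds allow, Option II a smaller one.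
The identity `P_k = α_k θ_k` is just the formula for `θ_k`. -/

section StepsizeBounds

variable {a t l b : ℝ}

lemma sq_le_mul_sq_of_le_sqrt_mul {x : ℝ} (hx : 0 ≤ x) (hb : 0 ≤ b) (h : b ≤ √x * a) :
    b ^ 2 ≤ x * a ^ 2 := by
  simpa only [mul_pow, Real.sq_sqrt hx] using pow_le_pow_left₀ hb h 2

lemma stepsize_caseTwo_bounds (ha : 0 < a) (ht : 0 ≤ t) (hl₁ : a / 2 < l) (hl₂ : l < a)
    (hb : b = min (√(l / (2 * (a - l)))) (√((1 + t) * l / (2 * l - a))) * a ∨ b = l) :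
    0 < b ∧ b ^ 2 ≤ l / (2 * (a - l)) * a ^ 2 ∧ b ^ 2 ≤ (1 + t) * l / (2 * l - a) * a ^ 2 := by
  have hl : 0 < l := by linarith
  have hal : 0 < a - l := by linarith
  have hla : 0 < 2 * l - a := by linarith
  rcases hb with rfl | hb
  · have hpos : 0 < min (√(l / (2 * (a - l)))) (√((1 + t) * l / (2 * l - a))) * a :=
      mul_pos (lt_min (Real.sqrt_pos.2 (by positivity)) (Real.sqrt_pos.2 (by positivity))) ha
    refine ⟨hpos, ?_, ?_⟩ <;> apply sq_le_mul_sq_of_le_sqrt_mul (by positivity) hpos.le <;>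
      gcongr
    exacts [min_le_left _ _, min_le_right _ _]
  · rw [hb]
    refine ⟨hl, ?_, ?_⟩ <;> rw [div_mul_eq_mul_div, le_div_iff₀ (by positivity)]
    · nlinarith [sq_nonneg (a - l)]
    · nlinarith [mul_nonneg (mul_nonneg ht hl.le) (sq_nonneg a),
        mul_pos hl (mul_pos hal (by linarith : 0 < a + 2 * l))]

lemma stepsize_caseThree_bounds (ha : 0 < a) (hl : 0 < l) (hl₂ : l ≤ a / 2)
    (hb : b = √(a / (2 * (a - l))) * l ∨ b = l / √2) :
    0 < b ∧ b ^ 2 ≤ a / (2 * (a - l)) * l ^ 2 := by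
  have hal : 0 < a - l := by linarith
  rcases hb with rfl | rfl
  · refine ⟨mul_pos (Real.sqrt_pos.2 (by positivity)) hl, ?_⟩
    rw [mul_pow, Real.sq_sqrt (by positivity)]
  · refine ⟨by positivity, ?_⟩
    rw [div_pow, Real.sq_sqrt zero_le_two, div_le_iff₀ two_pos, mul_assoc, div_mul_eq_mul_div,
      le_div_iff₀ (by positivity)]
    nlinarith [sq_nonneg l]

end StepsizeBounds

namespace AdaBB

variable {n : ℕ} (S : AdaBB n)

theorem α_pos_and_θ_nonneg (k : ℕ) : 0 < S.α k ∧ 0 ≤ S.θ k := by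
  induction k with
  | zero => exact ⟨S.hα0, S.hθ0⟩
  | succ k ih =>
    obtain ⟨ha, ht⟩ := ih
    have hl := S.hlampos k
    rcases le_or_gt (S.α k) (S.lam (k + 1)) with h₁ | h₁
    · obtain ⟨hb, hθ⟩ := S.hcase1 k h₁
      have hpos : 0 < S.α (k + 1) := hb ▸ mul_pos (Real.sqrt_pos.2 (by linarith)) ha
      exact ⟨hpos, hθ ▸ by positivity⟩
    rcases le_or_gt (S.lam (k + 1)) (S.α k / 2) with h₂ | h₂
    · obtain ⟨hb, hθ⟩ := S.hcase3 k h₂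
      have hpos := (stepsize_caseThree_bounds ha hl h₂ hb).1
      exact ⟨hpos, hθ ▸ by positivity⟩
    · obtain ⟨hb, hθ⟩ := S.hcase2 k h₂ h₁
      have hpos := (stepsize_caseTwo_bounds ha ht h₂ h₁ hb).1
      refine ⟨hpos, ?_⟩
      rw [hθ, sub_nonneg, div_le_div_iff₀ hl ha]
      nlinarith

theorem P_succ (k : ℕ) : S.P (k + 1) = S.Paux (k + 1) := if_neg k.succ_ne_zero

theorem P_succ_eq_α_mul_θ (k : ℕ) : S.P (k + 1) = S.α (k + 1) * S.θ (k + 1) := by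
  have ha := (S.α_pos_and_θ_nonneg k).1.ne'
  have hl := (S.hlampos k).ne'
  simp only [P_succ, Paux, Nat.add_sub_cancel]
  split_ifs with h₁ h₂
  · rw [(S.hcase1 k h₁).2]; field_simp
  · rw [(S.hcase2 k h₂ (not_le.1 h₁)).2]; field_simp
  · rw [(S.hcase3 k (not_lt.1 h₂)).2]; field_simp

theorem two_mul_M_succ_le_one (k : ℕ) : 2 * S.M (k + 1) ≤ 1 := by
  obtain ⟨ha, ht⟩ := S.α_pos_and_θ_nonneg k
  have hl := S.hlampos k
  simp only [M, Nat.add_sub_cancel]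
  split_ifs with h₁ h₂
  · norm_num
  · have hal : 0 < S.α k - S.lam (k + 1) := by linarith
    have hb := (stepsize_caseTwo_bounds ha ht h₂ (not_le.1 h₁) (S.hcase2 k h₂ (not_le.1 h₁)).1).2.1
    rw [div_mul_eq_mul_div, le_div_iff₀ (by positivity)] at hb
    rw [div_sub_div _ _ (by positivity) (by positivity), mul_div_assoc', div_le_one (by positivity)]
    nlinarith
  · have hal : 0 < S.α k - S.lam (k + 1) := by linarith
    have hb := (stepsize_caseThree_bounds ha hl (not_lt.1 h₂) (S.hcase3 k (not_lt.1 h₂)).1).2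
    rw [div_mul_eq_mul_div, le_div_iff₀ (by positivity)] at hb
    rw [div_sub_div _ _ (by positivity) (by positivity), mul_div_assoc', div_le_one (by positivity)]
    nlinarith

theorem P_succ_le (k : ℕ) : S.P (k + 1) ≤ S.α k * (1 + S.θ k) := by
  obtain ⟨ha, ht⟩ := S.α_pos_and_θ_nonneg k
  have hl := S.hlampos k
  simp only [P_succ, Paux, Nat.add_sub_cancel]
  split_ifs with h₁ h₂
  · rw [(S.hcase1 k h₁).1, mul_pow, Real.sq_sqrt (by linarith), div_le_iff₀ ha]
    nlinarith
  · have hb := (stepsize_caseTwo_bounds ha ht h₂ (not_le.1 h₁) (S.hcase2 k h₂ (not_le.1 h₁)).1).2.2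
    rw [div_mul_eq_mul_div, le_div_iff₀ (by linarith)] at hb
    rw [div_sub_div _ _ (by positivity) (by positivity), div_le_iff₀ (by positivity)]
    nlinarith
  · have hal : 0 < S.α k - S.lam (k + 1) := by linarith
    have hb := (stepsize_caseThree_bounds ha hl (not_lt.1 h₂) (S.hcase3 k (not_lt.1 h₂)).1).2
    rw [div_mul_eq_mul_div, le_div_iff₀ (by positivity)] at hb
    have hb_le_l : S.α (k + 1) ^ 2 ≤ S.lam (k + 1) ^ 2 := by
      nlinarith [mul_le_mul_of_nonneg_left (by linarith : S.α k ≤ 2 * (S.α k - S.lam (k + 1)))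
        (sq_nonneg (S.α (k + 1)))]
    rw [div_le_iff₀ ha]
    nlinarith [pow_le_pow_left₀ hl.le (by linarith : S.lam (k + 1) ≤ S.α k) 2]

end AdaBB

/-- Lemma 3.2: for the general AdaBB iteration, `P_k = α_k·θ_k` for all `k ≥ 1`, and
for all `k ≥ 0`, `2·M_{k+1} ≤ 1` and `P_{k+1} ≤ P_k + α_k`. -/
theorem adabb_MP_properties (n : ℕ) (S : AdaBB n) :
    (∀ k, 1 ≤ k → S.P k = S.α k * S.θ k) ∧
    (∀ k, 2 * S.M (k + 1) ≤ 1 ∧ S.P (k + 1) ≤ S.P k + S.α k) := by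
  refine ⟨fun k hk => ?_, fun k => ⟨S.two_mul_M_succ_le_one k, ?_⟩⟩
  · obtain ⟨k, rfl⟩ := Nat.exists_eq_add_of_le' hk
    exact S.P_succ_eq_α_mul_θ k
  · cases k with
    | zero => simp [AdaBB.P]
    | succ k => linarith [S.P_succ_le (k + 1), S.P_succ_eq_α_mul_θ k]
end

section
/- Ergodic convergence of AdaBB: define S_k = P_1 + Σ_{i=1}^k α_i and the weighted average x̄^k = ((α_k + P_k)·x^k + Σ_{i=1}^{k−1} w_i·x^i)/S_k. Then for every k ≥ 1, f(x̄^k) − f_* ≤ Υ_1/(2S_k). -/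
open scoped RealInnerProductSpace
open Finset Filter

/-! Each stepsize update satisfies a handful of scalar inequalities (`AdaBB.StepBounds`), checked
case by case. Together with the first-order characterisation of convexity and Cauchy–Schwarz applied
to the definition of `λ_k`, they give the descent inequality
`Υ_{k+1} + 2 w_{k-1} (f(x^{k-1}) - f(y)) ≤ Υ_k` for every point `y`. Telescoping, and the fact that
`Υ_{k+1}` dominates `2 (α_k + P_k) (f(x^k) - f(y))`, bounds the weighted sum of the gaps
`f(x^i) - f(y)` by `Υ_1 / 2`; the weights `w_i ≥ 0` and `α_k + P_k` add up to `S_k`, so Jensen's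
inequality finishes the proof. -/

theorem ConvexOn.apply_sub_le_of_hasFDerivAt {E : Type*} [NormedAddCommGroup E]
    [NormedSpace ℝ E] {s : Set E} {f : E → ℝ} {f' : E →L[ℝ] ℝ} {x y : E}
    (hf : ConvexOn ℝ s f) (hx : x ∈ s) (hy : y ∈ s) (hf' : HasFDerivAt f f' x) :
    f' (y - x) ≤ f y - f x := by
  have hline : ConvexOn ℝ (AffineMap.lineMap (k := ℝ) x y ⁻¹' s)
      (f ∘ AffineMap.lineMap (k := ℝ) x y) :=
    hf.comp_affineMap _
  have hderiv : HasDerivAt (f ∘ AffineMap.lineMap (k := ℝ) x y) (f' (y - x)) 0 := by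
    refine HasFDerivAt.comp_hasDerivAt (0 : ℝ) ?_ AffineMap.hasDerivAt_lineMap
    simpa using hf'
  simpa [slope_def_field] using
    hline.le_slope_of_hasDerivAt (by simpa using hx) (by simpa using hy) zero_lt_one hderiv

theorem ConvexOn.inner_le_sub_of_hasGradientAt {E : Type*} [NormedAddCommGroup E]
    [InnerProductSpace ℝ E] [CompleteSpace E] {s : Set E} {f : E → ℝ} {g x y : E}
    (hf : ConvexOn ℝ s f) (hx : x ∈ s) (hy : y ∈ s) (hg : HasGradientAt f g x) :
    ⟪g, y - x⟫ ≤ f y - f x := by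
  simpa using hf.apply_sub_le_of_hasFDerivAt hx hy hg.hasFDerivAt

theorem Finset.sum_range_succ_update_smul {R M : Type*} [AddCommMonoid M] [SMul R M]
    (w : ℕ → R) (v : ℕ → M) (k : ℕ) (c : R) :
    ∑ i ∈ range (k + 1), Function.update w k c i • v i = c • v k + ∑ i ∈ range k, w i • v i := by
  rw [sum_range_succ, Function.update_self, add_comm]
  congr 1
  exact sum_congr rfl fun i hi => by rw [Function.update_of_ne (mem_range.1 hi).ne]

theorem Finset.sum_range_eq_sum_Icc_of_eq_zero {M : Type*} [AddCommMonoid M] {f : ℕ → M}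
    (hf : f 0 = 0) (k : ℕ) : ∑ i ∈ range k, f i = ∑ i ∈ Icc 1 (k - 1), f i := by
  refine (sum_subset (fun i hi => ?_) fun i hi hi' => ?_).symm
  · simp only [mem_Icc, mem_range] at hi ⊢; omega
  · simp only [mem_Icc, mem_range] at hi hi'
    rw [show i = 0 by omega, hf]

/-- With `d = g₁ - g₀`, `hl` turns `a²(lhs - rhs)` into
`a²‖g₀‖²(s - pa - ma²) + a‖d‖²(s(a - 2l) + pal)`; since `s - pa - ma² ≤ 0` and Cauchy–Schwarz gives
`l²‖d‖² ≤ a²‖g₀‖²`, this is at most `‖d‖²` times the slack in `hsl`. -/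
theorem mul_norm_sq_sub_inner_le {E : Type*} [NormedAddCommGroup E] [InnerProductSpace ℝ E]
    {g₀ g₁ : E} {a l s p m : ℝ} (ha : 0 < a)
    (hl : l * ‖g₁ - g₀‖ ^ 2 = -(a * ⟪g₁ - g₀, g₀⟫))
    (hs : s ≤ p * a + m * a ^ 2)
    (hsl : s * (a - l) ^ 2 + p * a * l * (a - l) ≤ m * a ^ 2 * l ^ 2) :
    s * ‖g₁‖ ^ 2 - p * a * ⟪g₁, g₀⟫ ≤ m * a ^ 2 * ‖g₀‖ ^ 2 := by
  set d := g₁ - g₀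
  have hg₁ : g₁ = g₀ + d := by simp [d]
  have hD : 0 ≤ ‖d‖ ^ 2 := by positivity
  have hCS : ⟪d, g₀⟫ ^ 2 ≤ ‖d‖ ^ 2 * ‖g₀‖ ^ 2 := by
    rw [← mul_pow]
    exact sq_le_sq' (neg_le_of_abs_le (abs_real_inner_le_norm d g₀))
      (le_of_abs_le (abs_real_inner_le_norm d g₀))
  have hlD : l ^ 2 * ‖d‖ ^ 2 ≤ a ^ 2 * ‖g₀‖ ^ 2 := by
    rcases hD.eq_or_lt with h | h
    · rw [← h, mul_zero]; positivity
    · have hsq : (l * ‖d‖ ^ 2) ^ 2 = a ^ 2 * ⟪d, g₀⟫ ^ 2 := by rw [hl]; ring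
      refine le_of_mul_le_mul_right ?_ h
      nlinarith [mul_le_mul_of_nonneg_left hCS (sq_nonneg a)]
  have key : a ^ 2 * (s * ‖g₁‖ ^ 2 - p * a * ⟪g₁, g₀⟫ - m * a ^ 2 * ‖g₀‖ ^ 2) =
      a ^ 2 * ‖g₀‖ ^ 2 * (s - p * a - m * a ^ 2) + a * ‖d‖ ^ 2 * (s * (a - 2 * l) + p * a * l) := by
    rw [hg₁, norm_add_sq_real, inner_add_left, real_inner_self_eq_norm_sq, real_inner_comm d g₀]
    linear_combination (2 * s * a - p * a ^ 2) * hl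
  have hA : a ^ 2 * ‖g₀‖ ^ 2 * (s - p * a - m * a ^ 2) ≤
      l ^ 2 * ‖d‖ ^ 2 * (s - p * a - m * a ^ 2) :=
    mul_le_mul_of_nonpos_right hlD (by linarith)
  have hscaled : a ^ 2 * (s * ‖g₁‖ ^ 2 - p * a * ⟪g₁, g₀⟫ - m * a ^ 2 * ‖g₀‖ ^ 2) ≤ 0 := by
    rw [key]; nlinarith
  nlinarith [pow_pos ha 2]

namespace AdaBB

/-- The inequalities satisfied by one stepsize update, read with `(a, θ, l) = (α_{k-1}, θ_{k-1}, λ_k)`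
and `(a', θ', m, p) = (α_k, θ_k, M_k, P_k)`. -/
structure StepBounds (a θ l a' θ' m p : ℝ) : Prop where
  next_pos : 0 < a'
  next_θ_pos : 0 < θ'
  p_eq : p = a' * θ'
  p_le : p ≤ (1 + θ) * a
  m_nonneg : 0 ≤ m
  m_le : m ≤ 1 / 2
  sq_le : a' ^ 2 ≤ p * a + m * a ^ 2
  sq_mul_le : a' ^ 2 * (a - l) ^ 2 + p * a * l * (a - l) ≤ m * a ^ 2 * l ^ 2

theorem StepBounds.p_pos {a θ l a' θ' m p : ℝ} (h : StepBounds a θ l a' θ' m p) : 0 < p :=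
  h.p_eq ▸ mul_pos h.next_pos h.next_θ_pos

section StepBounds

variable {a θ l a' θ' : ℝ}

theorem stepBounds_of_le (ha : 0 < a) (hθ : 0 ≤ θ) (hl : a ≤ l)
    (ha' : a' = √(1 + θ) * a) (hθ' : θ' = a' / a) :
    StepBounds a θ l a' θ' 0 (a' ^ 2 / a) := by
  have hpos : 0 < a' := by rw [ha']; positivity
  have hsq : a' ^ 2 = (1 + θ) * a ^ 2 := by rw [ha', mul_pow, Real.sq_sqrt (by linarith)]
  have hp : a' ^ 2 / a * a = a' ^ 2 := div_mul_cancel₀ _ ha.ne'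
  refine ⟨hpos, by rw [hθ']; positivity, by rw [hθ']; ring, ?_, le_rfl, by norm_num, ?_, ?_⟩
  · rw [hsq]; exact (div_le_iff₀ ha).2 (by nlinarith)
  · linarith
  · have : a' ^ 2 / a * a * l * (a - l) = a' ^ 2 * l * (a - l) := by rw [hp]
    nlinarith [mul_nonneg (sq_nonneg a') (mul_nonneg ha.le (sub_nonneg.2 hl))]

theorem sq_bounds_of_half_lt_of_lt (ha : 0 < a) (hθ : 0 ≤ θ) (hl : a / 2 < l) (hla : l < a)
    (ha' : a' = min √(l / (2 * (a - l))) √((1 + θ) * l / (2 * l - a)) * a ∨ a' = l) :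
    0 < a' ∧ 2 * a' ^ 2 * (a - l) ≤ l * a ^ 2 ∧ a' ^ 2 * (2 * l - a) ≤ (1 + θ) * l * a ^ 2 := by
  have hl0 : 0 < l := by linarith
  have h2la : 0 < 2 * l - a := by linarith
  have hal : 0 < a - l := by linarith
  rcases ha' with ha' | ha'
  · set u := l / (2 * (a - l))
    set v := (1 + θ) * l / (2 * l - a)
    have hu : 0 < u := by positivity
    have hv : 0 < v := by positivity
    have hsq : a' ^ 2 = min u v * a ^ 2 := by
      rw [ha', mul_pow, ← Real.sqrt_monotone.map_min, Real.sq_sqrt (le_min hu.le hv.le)]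
    refine ⟨by rw [ha']; positivity, ?_, ?_⟩
    · have : min u v * (2 * (a - l)) ≤ l := (le_div_iff₀ (by positivity)).1 (min_le_left u v)
      rw [hsq]; nlinarith [sq_nonneg a]
    · have : min u v * (2 * l - a) ≤ (1 + θ) * l := (le_div_iff₀ h2la).1 (min_le_right u v)
      rw [hsq]; nlinarith [sq_nonneg a]
  · rw [ha']
    refine ⟨hl0, ?_, ?_⟩
    · nlinarith [mul_pos hl0 hl0, mul_nonneg hl0.le (sq_nonneg (a - l))]
    · nlinarith [mul_nonneg hθ (mul_nonneg hl0.le (sq_nonneg a)),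
        mul_nonneg hl0.le (sq_nonneg (a - l))]

theorem stepBounds_of_half_lt_of_lt (ha : 0 < a) (hl : a / 2 < l) (hla : l < a) (hpos : 0 < a')
    (h₁ : 2 * a' ^ 2 * (a - l) ≤ l * a ^ 2) (h₂ : a' ^ 2 * (2 * l - a) ≤ (1 + θ) * l * a ^ 2)
    (hθ' : θ' = 2 * a' / a - a' / l) :
    StepBounds a θ l a' θ' (a' ^ 2 / (l * a) - a' ^ 2 / a ^ 2) (2 * a' ^ 2 / a - a' ^ 2 / l) := by
  have hl0 : 0 < l := by linarith
  have h2la : 0 < 2 * l - a := by linarith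
  have hal : 0 < a - l := by linarith
  have hm : a' ^ 2 / (l * a) - a' ^ 2 / a ^ 2 = a' ^ 2 * (a - l) / (l * a ^ 2) := by field_simp
  have hp : 2 * a' ^ 2 / a - a' ^ 2 / l = a' ^ 2 * (2 * l - a) / (l * a) := by field_simp
  have hθ'' : θ' = a' * (2 * l - a) / (l * a) := by rw [hθ']; field_simp
  rw [hm, hp]
  refine ⟨hpos, by rw [hθ'']; positivity, by rw [hθ'']; ring, ?_, by positivity, ?_, ?_, ?_⟩
  · rw [div_le_iff₀ (by positivity)]; nlinarith
  · rw [div_le_iff₀ (by positivity)]; linarith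
  · apply le_of_eq; field_simp; ring
  · apply le_of_eq; field_simp; ring

theorem sq_bound_of_le_half (ha : 0 < a) (hl : 0 < l) (hla : l ≤ a / 2)
    (ha' : a' = √(a / (2 * (a - l))) * l ∨ a' = l / √2) :
    0 < a' ∧ 2 * a' ^ 2 * (a - l) ≤ a * l ^ 2 := by
  have hal : 0 < a - l := by linarith
  rcases ha' with rfl | rfl
  · refine ⟨by positivity, le_of_eq ?_⟩
    rw [mul_pow, Real.sq_sqrt (by positivity)]
    field_simp
  · refine ⟨by positivity, ?_⟩
    rw [div_pow, Real.sq_sqrt zero_le_two]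
    nlinarith [mul_pos hl hl]

theorem stepBounds_of_le_half (ha : 0 < a) (hθ : 0 ≤ θ) (hl : 0 < l) (hla : l ≤ a / 2)
    (hpos : 0 < a') (h : 2 * a' ^ 2 * (a - l) ≤ a * l ^ 2) (hθ' : θ' = a' / a) :
    StepBounds a θ l a' θ' (a' ^ 2 / l ^ 2 - a' ^ 2 / (a * l)) (a' ^ 2 / a) := by
  have hal : 0 < a - l := by linarith
  have hm : a' ^ 2 / l ^ 2 - a' ^ 2 / (a * l) = a' ^ 2 * (a - l) / (a * l ^ 2) := by field_simp
  have hsq : a' ^ 2 ≤ a ^ 2 := by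
    have : a' ^ 2 * a ≤ l ^ 2 * a := by
      nlinarith [mul_nonneg (sq_nonneg a') (by linarith : (0 : ℝ) ≤ a / 2 - l)]
    exact (le_of_mul_le_mul_right this ha).trans (pow_le_pow_left₀ hl.le (by linarith) 2)
  have hp : a' ^ 2 / a * a = a' ^ 2 := div_mul_cancel₀ _ ha.ne'
  rw [hm]
  refine ⟨hpos, by rw [hθ']; positivity, by rw [hθ']; ring, ?_, by positivity, ?_, ?_, ?_⟩
  · rw [div_le_iff₀ ha]; nlinarith [mul_nonneg hθ (sq_nonneg a)]
  · rw [div_le_iff₀ (by positivity)]; linarith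
  · have : 0 ≤ a' ^ 2 * (a - l) / (a * l ^ 2) * a ^ 2 := by positivity
    linarith
  · apply le_of_eq; field_simp; ring

end StepBounds

variable {n : ℕ} (S : AdaBB n)

theorem stepBounds_of_pos (k : ℕ) (ha : 0 < S.α k) (hθ : 0 ≤ S.θ k) :
    StepBounds (S.α k) (S.θ k) (S.lam (k + 1)) (S.α (k + 1)) (S.θ (k + 1)) (S.M (k + 1))
      (S.P (k + 1)) := by
  have hl := S.hlampos k
  simp only [M, P, Paux, Nat.add_sub_cancel, Nat.add_one_ne_zero, if_false]
  split_ifs with h₁ h₂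
  · obtain ⟨ha', hθ'⟩ := S.hcase1 k h₁
    exact stepBounds_of_le ha hθ h₁ ha' hθ'
  · obtain ⟨ha', hθ'⟩ := S.hcase2 k h₂ (not_le.1 h₁)
    obtain ⟨hpos, hb₁, hb₂⟩ := sq_bounds_of_half_lt_of_lt ha hθ h₂ (not_le.1 h₁) ha'
    exact stepBounds_of_half_lt_of_lt ha h₂ (not_le.1 h₁) hpos hb₁ hb₂ hθ'
  · obtain ⟨ha', hθ'⟩ := S.hcase3 k (not_lt.1 h₂)
    obtain ⟨hpos, hb⟩ := sq_bound_of_le_half ha hl (not_lt.1 h₂) ha'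
    exact stepBounds_of_le_half ha hθ hl (not_lt.1 h₂) hpos hb hθ'

theorem stepBounds (k : ℕ) :
    StepBounds (S.α k) (S.θ k) (S.lam (k + 1)) (S.α (k + 1)) (S.θ (k + 1)) (S.M (k + 1))
      (S.P (k + 1)) :=
  S.stepBounds_of_pos k (S.α_pos_and_θ_nonneg k).1 (S.α_pos_and_θ_nonneg k).2

theorem α_add_P_pos : ∀ k, 0 < S.α k + S.P k
  | 0 => by
    rw [show S.α 0 + S.P 0 = S.P 1 by simp [P]]
    exact (S.stepBounds 0).p_pos
  | k + 1 => add_pos (S.stepBounds k).next_pos (S.stepBounds k).p_pos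

theorem w_zero : S.w 0 = 0 := by simp [w, P]

theorem w_nonneg : ∀ k, 0 ≤ S.w k
  | 0 => S.w_zero.ge
  | k + 1 => by
    have hb := S.stepBounds k
    have hb' := S.stepBounds (k + 1)
    simp only [w]
    linarith [hb'.p_le, hb.p_eq]

theorem x_succ : ∀ k, S.x (k + 1) = S.x k - S.α k • S.f' (S.x k)
  | 0 => S.hx1
  | k + 1 => S.hstep k

theorem lam_mul_norm_sq (k : ℕ) :
    S.lam (k + 1) * ‖S.f' (S.x (k + 1)) - S.f' (S.x k)‖ ^ 2 =
      -(S.α k * ⟪S.f' (S.x (k + 1)) - S.f' (S.x k), S.f' (S.x k)⟫) := by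
  have hd : ‖S.f' (S.x (k + 1)) - S.f' (S.x k)‖ ^ 2 ≠ 0 := by
    simpa [sub_eq_zero] using S.hne k
  rw [S.hlam, div_mul_cancel₀ _ hd, S.x_succ, sub_sub_cancel_left, inner_neg_right,
    real_inner_smul_right]

theorem Upsilon_succ_add_le (y : EuclideanSpace ℝ (Fin n)) (j : ℕ) :
    S.Upsilon y (j + 2) + 2 * S.w j * (S.f (S.x j) - S.f y) ≤ S.Upsilon y (j + 1) := by
  have hb := S.stepBounds j
  have hb' := S.stepBounds (j + 1)
  have ha := (S.α_pos_and_θ_nonneg j).1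
  set g₀ := S.f' (S.x j)
  set g₁ := S.f' (S.x (j + 1))
  have hx₁ : S.x (j + 1) = S.x j - S.α j • g₀ := S.x_succ j
  have hx₂ : S.x (j + 2) = S.x (j + 1) - S.α (j + 1) • g₁ := S.x_succ (j + 1)
  have hcore : S.α (j + 1) ^ 2 * ‖g₁‖ ^ 2 - S.P (j + 1) * S.α j * ⟪g₁, g₀⟫ ≤
      S.M (j + 1) * S.α j ^ 2 * ‖g₀‖ ^ 2 :=
    mul_norm_sq_sub_inner_le ha (S.lam_mul_norm_sq j) hb.sq_le hb.sq_mul_le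
  have hconv_y : -⟪g₁, S.x (j + 1) - y⟫ ≤ S.f y - S.f (S.x (j + 1)) := by
    rw [← inner_neg_right, neg_sub]
    exact S.hconv.inner_le_sub_of_hasGradientAt (Set.mem_univ _) (Set.mem_univ y) (S.hgrad _)
  have hconv_x : S.α j * ⟪g₁, g₀⟫ ≤ S.f (S.x j) - S.f (S.x (j + 1)) := by
    rw [← real_inner_smul_right, ← sub_sub_cancel (S.x j) (S.α j • g₀), ← hx₁]
    exact S.hconv.inner_le_sub_of_hasGradientAt (Set.mem_univ _) (Set.mem_univ _) (S.hgrad _)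
  have hdist : ‖S.x (j + 2) - y‖ ^ 2 = ‖S.x (j + 1) - y‖ ^ 2 -
      2 * S.α (j + 1) * ⟪g₁, S.x (j + 1) - y⟫ + S.α (j + 1) ^ 2 * ‖g₁‖ ^ 2 := by
    rw [hx₂, sub_right_comm, norm_sub_sq_real, real_inner_smul_right, norm_smul, mul_pow,
      Real.norm_eq_abs, sq_abs, real_inner_comm g₁]
    ring
  have hstep₁ : ‖S.x (j + 1) - S.x j‖ ^ 2 = S.α j ^ 2 * ‖g₀‖ ^ 2 := by
    rw [hx₁, sub_sub_cancel_left, norm_neg, norm_smul, mul_pow, Real.norm_eq_abs, sq_abs]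
  have hstep₂ : ‖S.x (j + 2) - S.x (j + 1)‖ ^ 2 = S.α (j + 1) ^ 2 * ‖g₁‖ ^ 2 := by
    rw [hx₂, sub_sub_cancel_left, norm_neg, norm_smul, mul_pow, Real.norm_eq_abs, sq_abs]
  simp only [Upsilon, w, show j + 2 - 1 = j + 1 from rfl, Nat.add_sub_cancel]
  rw [hdist, hstep₁, hstep₂]
  have h₁ := mul_le_mul_of_nonneg_left hconv_y hb.next_pos.le
  have h₂ := mul_le_mul_of_nonneg_left hconv_x hb.p_pos.le
  have h₃ := mul_le_mul_of_nonneg_right hb'.m_le (by positivity : 0 ≤ S.α (j + 1) ^ 2 * ‖g₁‖ ^ 2)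
  linarith

theorem Upsilon_add_sum_le (y : EuclideanSpace ℝ (Fin n)) (k : ℕ) :
    S.Upsilon y (k + 1) + 2 * ∑ i ∈ range k, S.w i * (S.f (S.x i) - S.f y) ≤ S.Upsilon y 1 := by
  induction k with
  | zero => simp
  | succ k ih =>
    rw [sum_range_succ]
    linarith [S.Upsilon_succ_add_le y k]

theorem mul_sub_le_Upsilon (y : EuclideanSpace ℝ (Fin n)) (k : ℕ) :
    2 * (S.α k + S.P k) * (S.f (S.x k) - S.f y) ≤ S.Upsilon y (k + 1) := by
  have hM := (S.stepBounds k).m_nonneg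
  simp only [Upsilon, Nat.add_sub_cancel]
  nlinarith [sq_nonneg ‖S.x (k + 1) - y‖, sq_nonneg ‖S.x (k + 1) - S.x k‖]

theorem α_add_P_add_sum_w (k : ℕ) :
    S.α k + S.P k + ∑ i ∈ range k, S.w i = S.P 1 + ∑ i ∈ Icc 1 k, S.α i := by
  induction k with
  | zero => simp [P]
  | succ k ih =>
    rw [sum_range_succ, sum_Icc_succ_top (by omega : 1 ≤ k + 1)]
    have hw : S.w k = S.α k + S.P k - S.P (k + 1) := rfl
    linarith

theorem weighted_sum_le (y : EuclideanSpace ℝ (Fin n)) (k : ℕ) :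
    (S.α k + S.P k) * S.f (S.x k) + ∑ i ∈ range k, S.w i * S.f (S.x i) ≤
      (S.P 1 + ∑ i ∈ Icc 1 k, S.α i) * S.f y + S.Upsilon y 1 / 2 := by
  have hsum := S.Upsilon_add_sum_le y k
  have hlast := S.mul_sub_le_Upsilon y k
  simp only [mul_sub, sum_sub_distrib, ← sum_mul] at hsum hlast
  rw [← S.α_add_P_add_sum_w]
  linarith

theorem P_one_add_sum_α_pos (k : ℕ) : 0 < S.P 1 + ∑ i ∈ Icc 1 k, S.α i := by
  rw [← S.α_add_P_add_sum_w]
  exact add_pos_of_pos_of_nonneg (S.α_add_P_pos k) (sum_nonneg fun i _ => S.w_nonneg i)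

noncomputable def ergodicWeight (k : ℕ) : ℕ → ℝ := Function.update S.w k (S.α k + S.P k)

theorem ergodicWeight_nonneg (k i : ℕ) : 0 ≤ S.ergodicWeight k i := by
  rcases eq_or_ne i k with rfl | h
  · simpa [ergodicWeight] using (S.α_add_P_pos i).le
  · simpa [ergodicWeight, h] using S.w_nonneg i

theorem sum_ergodicWeight_smul {M : Type*} [AddCommMonoid M] [SMul ℝ M] (v : ℕ → M) (k : ℕ) :
    ∑ i ∈ range (k + 1), S.ergodicWeight k i • v i =
      (S.α k + S.P k) • v k + ∑ i ∈ range k, S.w i • v i :=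
  sum_range_succ_update_smul _ _ _ _

theorem sum_ergodicWeight (k : ℕ) :
    ∑ i ∈ range (k + 1), S.ergodicWeight k i = S.P 1 + ∑ i ∈ Icc 1 k, S.α i := by
  simpa [S.α_add_P_add_sum_w] using S.sum_ergodicWeight_smul (fun _ => (1 : ℝ)) k

end AdaBB

theorem adabb_ergodic_convergence_general (n : ℕ) (S : AdaBB n)
    (xs : EuclideanSpace ℝ (Fin n))
    (k : ℕ) :
    S.f ((S.P 1 + ∑ i ∈ Finset.Icc 1 k, S.α i)⁻¹ •
        ((S.α k + S.P k) • S.x k + ∑ i ∈ Finset.Icc 1 (k - 1), S.w i • S.x i)) - S.f xs ≤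
      S.Upsilon xs 1 / (2 * (S.P 1 + ∑ i ∈ Finset.Icc 1 k, S.α i)) := by
  have hW := S.P_one_add_sum_α_pos k
  have hJ := S.hconv.map_centerMass_le (fun i _ => S.ergodicWeight_nonneg k i)
    (S.sum_ergodicWeight k ▸ hW) fun i _ => Set.mem_univ (S.x i)
  rw [centerMass, centerMass, S.sum_ergodicWeight, S.sum_ergodicWeight_smul,
    S.sum_ergodicWeight_smul, sum_range_eq_sum_Icc_of_eq_zero (f := fun i => S.w i • S.x i)
      (by rw [S.w_zero, zero_smul])] at hJ
  simp only [Function.comp_apply, smul_eq_mul] at hJ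
  set W := S.P 1 + ∑ i ∈ Icc 1 k, S.α i
  calc _ ≤ W⁻¹ * (W * S.f xs + S.Upsilon xs 1 / 2) - S.f xs := by
        gcongr
        exact hJ.trans (mul_le_mul_of_nonneg_left (S.weighted_sum_le xs k) (inv_nonneg.2 hW.le))
    _ = _ := by field_simp; ring

/-- Theorem 3.8 (ergodic convergence of AdaBB): with `S_k = P_1 + Σ_{i=1}^k α_i` and
`x̄^k = ((α_k + P_k)·x^k + Σ_{i=1}^{k-1} w_i·x^i)/S_k`, one has
`f(x̄^k) - f_* ≤ Υ_1/(2·S_k)` for every `k ≥ 1`. -/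
theorem adabb_ergodic_convergence (n : ℕ) (S : AdaBB n)
    (xs : EuclideanSpace ℝ (Fin n)) (hxs : ∀ y, S.f xs ≤ S.f y)
    (k : ℕ) (hk : 1 ≤ k) :
    S.f ((S.P 1 + ∑ i ∈ Finset.Icc 1 k, S.α i)⁻¹ •
        ((S.α k + S.P k) • S.x k + ∑ i ∈ Finset.Icc 1 (k - 1), S.w i • S.x i)) - S.f xs ≤
      S.Upsilon xs 1 / (2 * (S.P 1 + ∑ i ∈ Finset.Icc 1 k, S.α i)) :=
  adabb_ergodic_convergence_general n S xs k
end
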